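/- Let A and B be associative k-algebras, let (▷, ◁, θ) be a non-abelian 2-cocycle on A with values in B, and let r: B→A be a (▷,◁,θ)-twisted Rota-Baxter operator, i.e., r(x)·_A r(y) = r(r(x)▷y + x◁r(y) + x·_B y + θ(r(x),r(y))) for all x,y ∈ B. Then B with the operations x ≺_r y := x◁r(y), x ≻_r y := r(x)▷y, x ⋎_r y := θ(r(x),r(y)), and x·_B y is a twisted tridendriform algebra, i.e., the identities (TT1)–(TT8) hold for these operations. -/
import Mathlib


/-- A twisted tridendriform algebra structure on `V` is given by four bilinear operations
`≺ = P`, `≻ = S`, `⋎ = C`, `· = M` satisfying the identities (TT1)–(TT8), where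
`x ⋆ y := x≺y + x≻y + x⋎y + x·y`. -/
def IsTwistedTridend {k V : Type*} [Field k] [AddCommGroup V] [Module k V]
    (P S C M : V →ₗ[k] V →ₗ[k] V) : Prop :=
  ∀ x y z : V,
    P (P x y) z = P x (P y z + S y z + C y z + M y z) + M x (C y z) ∧
    P (S x y) z = S x (P y z) ∧
    S (P x y + S x y + C x y + M x y) z + M (C x y) z = S x (S y z) ∧
    M (S x y) z = S x (M y z) ∧
    M (P x y) z = M x (S y z) ∧
    P (M x y) z = M x (P y z) ∧
    M (M x y) z = M x (M y z) ∧
    P (C x y) z + C (P x y + S x y + C x y + M x y) z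
      = S x (C y z) + C x (P y z + S y z + C y z + M y z)

variable {k A B : Type*} [Field k] [AddCommGroup A] [Module k A] [AddCommGroup B] [Module k B]

/-- if `(▷ = tr, ◁ = tl, θ)` is a non-abelian 2-cocycle on the associative
algebra `A` with values in the associative algebra `B`, and `r : B → A` is a
`(▷,◁,θ)`-twisted Rota-Baxter operator, then `B` with the operations
`x ≺_r y = x◁r(y)`, `x ≻_r y = r(x)▷y`, `x ⋎_r y = θ(r(x),r(y))`, `x·_B y`
is a twisted tridendriform algebra. -/
theorem twistedRotaBaxter_twistedTridend
    (μ : A →ₗ[k] A →ₗ[k] A) (ν : B →ₗ[k] B →ₗ[k] B)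
    (hμ : ∀ a b c : A, μ (μ a b) c = μ a (μ b c))
    (hν : ∀ x y z : B, ν (ν x y) z = ν x (ν y z))
    (tr : A →ₗ[k] B →ₗ[k] B) (tl : B →ₗ[k] A →ₗ[k] B) (θ : A →ₗ[k] A →ₗ[k] B)
    (hc1 : ∀ (a b : A) (x : B), tr (μ a b) x + ν (θ a b) x = tr a (tr b x))
    (hc2 : ∀ (a : A) (x : B) (b : A), tl (tr a x) b = tr a (tl x b))
    (hc3 : ∀ (x : B) (a b : A), tl (tl x a) b = tl x (μ a b) + ν x (θ a b))
    (hc4 : ∀ (a : A) (x y : B), ν (tr a x) y = tr a (ν x y))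
    (hc5 : ∀ (x : B) (a : A) (y : B), ν (tl x a) y = ν x (tr a y))
    (hc6 : ∀ (x y : B) (a : A), tl (ν x y) a = ν x (tl y a))
    (hc7 : ∀ a b c : A, tl (θ a b) c + θ (μ a b) c = tr a (θ b c) + θ a (μ b c))
    (r : B →ₗ[k] A)
    (hrb : ∀ x y : B,
        μ (r x) (r y) = r (tr (r x) y + tl x (r y) + ν x y + θ (r x) (r y))) :
    IsTwistedTridend (tl.compl₂ r) (tr ∘ₗ r) ((θ ∘ₗ r).compl₂ r) ν := by
  have key : ∀ u v : B, r (tl u (r v) + tr (r u) v + θ (r u) (r v) + ν u v)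
      = μ (r u) (r v) := by
    intro u v; rw [hrb]; congr 1; abel
  intro x y z
  simp only [LinearMap.compl₂_apply, LinearMap.comp_apply]
  refine ⟨?_, hc2 _ _ _, ?_, hc4 _ _ _, hc5 _ _ _, hc6 _ _ _, hν _ _ _, ?_⟩
  · rw [hc3, key]
  · rw [key]; exact hc1 _ _ _
  · rw [key, key]; exact hc7 _ _ _
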